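/- Let m ≥ 2, k ∈ {1,…,m−1}, and let C ⊆ {1,…,2^m−1} be a set of 3·2^{k−1} consecutive integers. Then every gap of the set ψ(C) ∪ {0,1} is at most 5/2^{k+2}, where ψ(n) = Σ_{i=1}^m ((e_{i−1} + e_i) mod 2)/2^i with e₀ := 0. -/

import Mathlib

/-- The `i`-th digit (1-based) of `n` in base `b`, with the convention that the
`0`-th digit is `0`. -/
def nthDigit (b n i : ℕ) : ℕ := if i = 0 then 0 else n / b ^ (i - 1) % b
/-- The map `ψ(n) = Σ_{i=1}^m ((e_{i-1} + e_i) mod 2)/2^i` with the convention `e₀ = 0`. -/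
noncomputable def psiMap (m n : ℕ) : ℝ :=
  ∑ i ∈ Finset.Icc 1 m,
    (((nthDigit 2 n (i - 1) + nthDigit 2 n i) % 2 : ℕ) : ℝ) / (2 : ℝ) ^ i

/-!
Write `ψ(n) = psiNum m n / 2^m` with `psiNum m n < 2^m`. Splitting `n = 2s + e`, the even arguments
reproduce the picture one level down in the lower half, `ψ(2s) = ψ(s)/2`, while the odd arguments
reproduce it in the upper half rotated by half a turn: `ψ(2s+1) = 1/2 + ((ψ(s) + 1/2) mod 1)/2`.
A run of `2L` consecutive integers splits into its even and its odd part, two runs of `L` halves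
shifted by at most one. Hence, going from `(m, k)` to `(m + 1, k + 1)`, the gaps of the numerators
`psiNum` inside either half keep the bound `5 · 2^(m-k-2)`, and the gaps across the middle and across
the ends are controlled by "bridges" across the cut points `0` and `2^(m-1)` one level down,
between two runs shifted by at most one. Under the recursion the four kinds of bridge are carried into one another,
and for `k = 1` they are read off from the values at `4s + 1`, `4s + 2`, `4s + 3`, `4s + 4`.

The case `m = k + 1` reduces to level `m + 1`: there `n` and `n + 2^m` take the two values
`2 psiNum m n` and `2 psiNum m n + 1`, so a gap of at least `3` at level `m` leaves a gap of at
least `6` at level `m + 1` for one of the two shifted runs.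
-/

def psiDigit (n i : ℕ) : ℕ := (nthDigit 2 n (i - 1) + nthDigit 2 n i) % 2

def psiNum : ℕ → ℕ → ℕ
  | 0, _ => 0
  | m + 1, n => 2 * psiNum m n + psiDigit n (m + 1)

theorem psiNum_succ (m n : ℕ) : psiNum (m + 1) n = 2 * psiNum m n + psiDigit n (m + 1) := rfl

theorem psiMap_eq (m n : ℕ) : psiMap m n = psiNum m n / 2 ^ m := by
  induction m with
  | zero => simp [psiMap, psiNum]
  | succ m ih =>
    rw [psiMap, Finset.sum_Icc_succ_top (by omega), ← psiMap, ih, psiNum_succ]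
    push_cast [psiDigit]
    field_simp
    ring

theorem psiDigit_le_one (n i : ℕ) : psiDigit n i ≤ 1 := by
  unfold psiDigit; omega

theorem psiNum_lt (m n : ℕ) : psiNum m n < 2 ^ m := by
  induction m with
  | zero => simp [psiNum]
  | succ m ih =>
    have := psiDigit_le_one n (m + 1)
    rw [psiNum_succ, pow_succ]
    omega

theorem nthDigit_succ (b n i : ℕ) : nthDigit b n (i + 1) = n / b ^ i % b := by
  simp [nthDigit]

theorem nthDigit_add_two_pow_mul {m i : ℕ} (n c : ℕ) (hi : i ≤ m) :
    nthDigit 2 (n + 2 ^ m * c) i = nthDigit 2 n i := by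
  rcases i with _ | i
  · rfl
  · rw [nthDigit_succ, nthDigit_succ, show m = i + 1 + (m - i - 1) by omega, pow_add, pow_succ,
      mul_assoc, mul_assoc, Nat.add_mul_div_left _ _ (by positivity), Nat.add_mul_mod_self_left]

theorem psiNum_add_two_pow_mul (m n c : ℕ) : psiNum m (n + 2 ^ m * c) = psiNum m n := by
  suffices ∀ l ≤ m, psiNum l (n + 2 ^ m * c) = psiNum l n from this m le_rfl
  intro l hl
  induction l with
  | zero => rfl
  | succ l ih =>
    simp only [psiNum_succ, psiDigit, ih (by omega), nthDigit_add_two_pow_mul n c hl,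
      nthDigit_add_two_pow_mul n c (show l + 1 - 1 ≤ m by omega)]

theorem psiNum_succ_add_mul_two_pow (m n : ℕ) {ε : ℕ} (hε : ε ≤ 1) :
    psiNum (m + 1) (n + ε * 2 ^ m) = 2 * psiNum m n + (psiDigit n (m + 1) + ε) % 2 := by
  have := psiDigit_le_one n (m + 1)
  interval_cases ε
  · rw [psiNum_succ, zero_mul, add_zero, add_zero, Nat.mod_eq_of_lt (by omega)]
  · have hlow := nthDigit_add_two_pow_mul n 1 (le_refl m)
    rw [mul_one] at hlow
    rw [one_mul, psiNum_succ, ← mul_one (2 ^ m), psiNum_add_two_pow_mul, mul_one, psiDigit,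
      psiDigit, Nat.add_sub_cancel, hlow, nthDigit_succ, nthDigit_succ,
      Nat.add_div_right _ (by positivity)]
    omega

theorem psiNum_injOn (m : ℕ) : Set.InjOn (psiNum m) (Set.Iio (2 ^ m)) := by
  induction m with
  | zero => intro n hn n' hn' _; simp_all
  | succ m ih =>
    have hsplit : ∀ n < 2 ^ (m + 1), ∃ r < 2 ^ m, ∃ ε ≤ 1, n = r + ε * 2 ^ m := fun n hn => by
      rw [pow_succ] at hn
      rcases lt_or_ge n (2 ^ m) with h | h
      · exact ⟨n, h, 0, zero_le_one, by simp⟩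
      · exact ⟨n - 2 ^ m, by omega, 1, le_rfl, by omega⟩
    intro n hn n' hn' heq
    obtain ⟨r, hr, ε, hε, rfl⟩ := hsplit n hn
    obtain ⟨r', hr', ε', hε', rfl⟩ := hsplit n' hn'
    rw [psiNum_succ_add_mul_two_pow m _ hε, psiNum_succ_add_mul_two_pow m _ hε'] at heq
    obtain rfl : r = r' := ih hr hr' (by omega)
    obtain rfl : ε = ε' := by omega
    rfl

theorem psiNum_succ_div (m n : ℕ) : psiNum (m + 1) n / 2 ^ m = n % 2 := by
  induction m with
  | zero => simp [psiNum, psiDigit, nthDigit]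
  | succ m ih =>
    have := psiDigit_le_one n (m + 1 + 1)
    rw [psiNum_succ, pow_succ', ← Nat.div_div_eq_div_mul, ← ih]
    congr 1
    omega

theorem psiNum_succ_lt_iff (m n : ℕ) : psiNum (m + 1) n < 2 ^ m ↔ n % 2 = 0 := by
  rw [← psiNum_succ_div m n, Nat.div_eq_zero_iff]
  simp

theorem psiDigit_two_mul_add {e i : ℕ} (s : ℕ) (he : e ≤ 1) (hi : 2 ≤ i) :
    psiDigit (2 * s + e) (i + 1) = psiDigit s i := by
  obtain ⟨i, rfl⟩ : ∃ l, i = l + 2 := ⟨i - 2, by omega⟩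
  have hshift : ∀ l, nthDigit 2 (2 * s + e) (l + 2) = nthDigit 2 s (l + 1) := fun l => by
    rw [nthDigit_succ, nthDigit_succ, pow_succ', ← Nat.div_div_eq_div_mul,
      show (2 * s + e) / 2 = s by omega]
  simp only [psiDigit, Nat.add_sub_cancel, show i + 2 = i + 1 + 1 from rfl, hshift]

theorem psiNum_two_mul_add {e : ℕ} (m s : ℕ) (he : e ≤ 1) :
    psiNum (m + 2) (2 * s + e) + s % 2 * 2 ^ m =
      e * 2 ^ (m + 1) + (e + s) % 2 * 2 ^ m + psiNum (m + 1) s := by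
  induction m with
  | zero =>
    simp [psiNum, psiDigit, nthDigit]
    omega
  | succ m ih =>
    rw [psiNum_succ (m + 2), psiNum_succ (m + 1) s, psiDigit_two_mul_add s he (by omega),
      show m + 1 + 1 = m + 2 from rfl]
    simp only [pow_succ] at ih ⊢
    linarith

theorem psiNum_two_mul (m s : ℕ) : psiNum (m + 1) (2 * s) = psiNum m s := by
  rcases m with _ | m
  · simp [psiNum, psiDigit, nthDigit]
  · have := psiNum_two_mul_add m s (Nat.zero_le 1)
    simp only [add_zero, zero_mul, zero_add] at this
    exact Nat.add_right_cancel (this.trans (add_comm _ _))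

theorem psiNum_two_mul_add_one_of_lt {m s : ℕ} (h : psiNum (m + 1) s < 2 ^ m) :
    psiNum (m + 2) (2 * s + 1) = 2 ^ (m + 1) + 2 ^ m + psiNum (m + 1) s := by
  have hs := (psiNum_succ_lt_iff m s).1 h
  have := psiNum_two_mul_add m s (le_refl 1)
  rw [hs, show (1 + s) % 2 = 1 by omega] at this
  omega

theorem psiNum_two_mul_add_one_of_le {m s : ℕ} (h : 2 ^ m ≤ psiNum (m + 1) s) :
    psiNum (m + 2) (2 * s + 1) = 2 ^ m + psiNum (m + 1) s := by
  have hs : s % 2 = 1 := by have := (psiNum_succ_lt_iff m s).not.1 (by omega); omega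
  have := psiNum_two_mul_add m s (le_refl 1)
  rw [hs, show (1 + s) % 2 = 0 by omega, pow_succ] at this
  omega

theorem psiNum_two_mul_add_one_mem_Icc {m s n : ℕ} (hn : n = s ∨ n = s + 1) :
    psiNum (m + 2) (2 * s + 1) ∈
      Set.Icc (psiNum (m + 1) n + 2 ^ m) (psiNum (m + 1) n + 3 * 2 ^ m) := by
  have hpar := psiNum_succ_lt_iff m s
  have hpar' := psiNum_succ_lt_iff m (s + 1)
  have hs := psiNum_lt (m + 1) s
  have hs' := psiNum_lt (m + 1) (s + 1)
  rw [pow_succ] at hs hs'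
  rcases lt_or_ge (psiNum (m + 1) s) (2 ^ m) with h | h
  · rw [psiNum_two_mul_add_one_of_lt h, pow_succ]
    constructor <;> rcases hn with rfl | rfl <;> omega
  · rw [psiNum_two_mul_add_one_of_le h]
    constructor <;> rcases hn with rfl | rfl <;> omega

theorem psiNum_four_mul_add_one (m s : ℕ) :
    psiNum (m + 3) (4 * s + 1) = 2 ^ (m + 2) + 2 ^ (m + 1) + psiNum (m + 1) s := by
  have h : psiNum (m + 2) (2 * s) < 2 ^ (m + 1) := psiNum_two_mul (m + 1) s ▸ psiNum_lt (m + 1) s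
  rw [show 4 * s + 1 = 2 * (2 * s) + 1 by ring, psiNum_two_mul_add_one_of_lt h, psiNum_two_mul]

theorem psiNum_four_mul_add_three (m s : ℕ) :
    psiNum (m + 3) (4 * s + 3) = 2 ^ (m + 1) + psiNum (m + 2) (2 * s + 1) := by
  have h : 2 ^ (m + 1) ≤ psiNum (m + 2) (2 * s + 1) :=
    not_lt.1 fun h => by have := (psiNum_succ_lt_iff (m + 1) _).1 h; omega
  rw [show 4 * s + 3 = 2 * (2 * s + 1) + 1 by ring, psiNum_two_mul_add_one_of_le h]

/-- A bridge of length at most `B` at level `m + 1` (half-period `2^m`) from just below the cut `c`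
to just above the cut `c'`. For `c ≠ c'` it becomes, one level up, a bridge across a single cut,
because the odd arguments carry the two halves over with a rotation. -/
def Bridge (m B L tp tq c c' : ℕ) : Prop :=
  ∃ p ∈ Set.Ico tp (tp + L), ∃ q ∈ Set.Ico tq (tq + L),
    psiNum (m + 1) p < c ∧ c ≤ psiNum (m + 1) p + 2 ^ m ∧
    c' ≤ psiNum (m + 1) q ∧ psiNum (m + 1) q < c' + 2 ^ m ∧
    c + psiNum (m + 1) q ≤ psiNum (m + 1) p + c' + B

section Bridge

variable {m B L t d : ℕ}

theorem bridge_half_half_succ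
    (h : ∀ t d, d ≤ 1 → Bridge m B L (t + d) t (2 ^ (m + 1)) (2 ^ m)) (hd : d ≤ 1) :
    Bridge (m + 1) B (2 * L) (t + d) t (2 ^ (m + 1)) (2 ^ (m + 1)) := by
  obtain ⟨p, ⟨hp₁, hp₂⟩, q, ⟨hq₁, hq₂⟩, hp, -, hq, hq', hpq⟩ :=
    h (t / 2) ((t + d + 1) / 2 - t / 2) (by omega)
  refine ⟨2 * p, ⟨by omega, by omega⟩, 2 * q + 1, ⟨by omega, by omega⟩, ?_⟩
  rw [psiNum_two_mul, psiNum_two_mul_add_one_of_le hq]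
  have := pow_succ 2 m
  omega

theorem bridge_full_half_succ
    (h : ∀ t d, d ≤ 1 → Bridge m B L (t + d) t (2 ^ m) (2 ^ m)) (hd : d ≤ 1) :
    Bridge (m + 1) B (2 * L) (t + d) t (2 ^ (m + 2)) (2 ^ (m + 1)) := by
  obtain ⟨p, ⟨hp₁, hp₂⟩, q, ⟨hq₁, hq₂⟩, hp, -, hq, hq', hpq⟩ :=
    h (t / 2) ((t + d) / 2 - t / 2) (by omega)
  refine ⟨2 * p + 1, ⟨by omega, by omega⟩, 2 * q + 1, ⟨by omega, by omega⟩, ?_⟩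
  rw [psiNum_two_mul_add_one_of_lt hp, psiNum_two_mul_add_one_of_le hq]
  have := pow_succ 2 m
  have : 2 ^ (m + 2) = 2 ^ (m + 1) * 2 := pow_succ 2 (m + 1)
  omega

theorem bridge_full_zero_succ
    (h : ∀ t d, d ≤ 1 → Bridge m B L t (t + d) (2 ^ m) 0) (hd : d ≤ 1) :
    Bridge (m + 1) B (2 * L) t (t + d) (2 ^ (m + 2)) 0 := by
  obtain ⟨p, ⟨hp₁, hp₂⟩, q, ⟨hq₁, hq₂⟩, hp, -, -, hq, hpq⟩ :=
    h (t / 2) ((t + d + 1) / 2 - t / 2) (by omega)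
  refine ⟨2 * p + 1, ⟨by omega, by omega⟩, 2 * q, ⟨by omega, by omega⟩, ?_⟩
  rw [psiNum_two_mul_add_one_of_lt hp, psiNum_two_mul]
  have := pow_succ 2 m
  have : 2 ^ (m + 2) = 2 ^ (m + 1) * 2 := pow_succ 2 (m + 1)
  omega

theorem bridge_half_zero_succ
    (h : ∀ t d, d ≤ 1 → Bridge m B L t (t + d) (2 ^ (m + 1)) 0) (hd : d ≤ 1) :
    Bridge (m + 1) B (2 * L) t (t + d) (2 ^ (m + 1)) 0 := by
  obtain ⟨p, ⟨hp₁, hp₂⟩, q, ⟨hq₁, hq₂⟩, hp, hp', -, hq, hpq⟩ :=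
    h ((t + 1) / 2) ((t + d + 1) / 2 - (t + 1) / 2) (by omega)
  refine ⟨2 * p, ⟨by omega, by omega⟩, 2 * q, ⟨by omega, by omega⟩, ?_⟩
  rw [psiNum_two_mul, psiNum_two_mul]
  have := pow_succ 2 m
  omega

theorem bridge_full_half_of_le (hB : 2 ^ m ≤ B) (hL : 3 ≤ L) (hd : d ≤ 1) :
    Bridge m B L (t + d) t (2 ^ (m + 1)) (2 ^ m) := by
  have hn := (psiNum_succ_lt_iff m (t + 1 + t % 2)).not.2 (by omega)
  have := psiNum_lt (m + 1) (t + 1 + t % 2)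
  refine ⟨t + 1 + t % 2, ⟨by omega, by omega⟩, t + 1 + t % 2, ⟨by omega, by omega⟩, ?_⟩
  have := pow_succ 2 m
  omega

theorem bridge_half_zero_of_le (hB : 2 ^ m ≤ B) (hL : 3 ≤ L) (hd : d ≤ 1) :
    Bridge m B L t (t + d) (2 ^ m) 0 := by
  have hn := (psiNum_succ_lt_iff m (t + 2 - t % 2)).2 (by omega)
  exact ⟨t + 2 - t % 2, ⟨by omega, by omega⟩, t + 2 - t % 2, ⟨by omega, by omega⟩, by omega⟩

theorem bridge_half_half_and_full_zero_three (m t : ℕ) (hd : d ≤ 1) :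
    Bridge (m + 2) (5 * 2 ^ m) 3 (t + d) t (2 ^ (m + 2)) (2 ^ (m + 2)) ∧
      Bridge (m + 2) (5 * 2 ^ m) 3 t (t + d) (2 ^ (m + 3)) 0 := by
  obtain ⟨s, r, hr, rfl⟩ : ∃ s r, r < 4 ∧ t = 4 * s + r := ⟨t / 4, t % 4, by omega, by omega⟩
  have h₁ := psiNum_four_mul_add_one m s
  have h₂ : psiNum (m + 3) (4 * s + 2) = psiNum (m + 2) (2 * s + 1) := by
    rw [show 4 * s + 2 = 2 * (2 * s + 1) by ring, psiNum_two_mul]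
  have h₃ := psiNum_four_mul_add_three m s
  have h₄ : psiNum (m + 3) (4 * s + 4) = psiNum (m + 1) (s + 1) := by
    rw [show 4 * s + 4 = 2 * (2 * (s + 1)) by ring, psiNum_two_mul, psiNum_two_mul]
  obtain ⟨hx₁, hx₂⟩ := psiNum_two_mul_add_one_mem_Icc (m := m) (n := s) (.inl rfl)
  obtain ⟨hy₁, hy₂⟩ := psiNum_two_mul_add_one_mem_Icc (m := m) (n := s + 1) (.inr rfl)
  have hz := psiNum_lt (m + 2) (2 * s + 1)
  have hz' : 2 ^ (m + 1) ≤ psiNum (m + 2) (2 * s + 1) :=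
    not_lt.1 ((psiNum_succ_lt_iff (m + 1) _).not.2 (by omega))
  have := psiNum_lt (m + 1) s
  have := psiNum_lt (m + 1) (s + 1)
  unfold Bridge
  rw [show m + 2 + 1 = m + 3 from rfl]
  simp only [pow_succ] at *
  rcases le_or_gt r 1 with hr1 | hr1
  · exact ⟨⟨4 * s + 2, ⟨by omega, by omega⟩, 4 * s + 1, ⟨by omega, by omega⟩, by omega⟩,
      ⟨4 * s + 1, ⟨by omega, by omega⟩, 4 * s + 2, ⟨by omega, by omega⟩, by omega⟩⟩
  · exact ⟨⟨4 * s + 4, ⟨by omega, by omega⟩, 4 * s + 3, ⟨by omega, by omega⟩, by omega⟩,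
      ⟨4 * s + 3, ⟨by omega, by omega⟩, 4 * s + 4, ⟨by omega, by omega⟩, by omega⟩⟩

end Bridge

def PsiBridges (m B L : ℕ) : Prop :=
  ∀ t d, d ≤ 1 →
    Bridge m B L (t + d) t (2 ^ m) (2 ^ m) ∧ Bridge m B L (t + d) t (2 ^ (m + 1)) (2 ^ m) ∧
      Bridge m B L t (t + d) (2 ^ (m + 1)) 0 ∧ Bridge m B L t (t + d) (2 ^ m) 0

theorem PsiBridges.succ {m B L : ℕ} (h : PsiBridges m B L) : PsiBridges (m + 1) B (2 * L) :=
  fun _ _ hd =>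
    ⟨bridge_half_half_succ (fun t d hd => (h t d hd).2.1) hd,
      bridge_full_half_succ (fun t d hd => (h t d hd).1) hd,
      bridge_full_zero_succ (fun t d hd => (h t d hd).2.2.2) hd,
      bridge_half_zero_succ (fun t d hd => (h t d hd).2.2.1) hd⟩

theorem psiBridges_three_mul_two_pow (j k : ℕ) :
    PsiBridges (k + j + 2) (5 * 2 ^ j) (3 * 2 ^ k) := by
  induction k with
  | zero =>
    have hB : 2 ^ (j + 2) ≤ 5 * 2 ^ j := by rw [pow_add]; omega
    intro t d hd
    rw [zero_add, pow_zero, mul_one]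
    obtain ⟨hhalf, hzero⟩ := bridge_half_half_and_full_zero_three j t hd
    exact ⟨hhalf, bridge_full_half_of_le hB le_rfl hd, hzero, bridge_half_zero_of_le hB le_rfl hd⟩
  | succ k ih =>
    rw [show k + 1 + j + 2 = k + j + 2 + 1 by omega, pow_succ, mul_comm _ 2, ← mul_assoc,
      mul_comm 3 2, mul_assoc]
    exact ih.succ

def psiPoints (m : ℕ) (W : Set ℕ) : Set ℕ := {0, 2 ^ m} ∪ psiNum m '' W

theorem psiPoints_le {m : ℕ} {W : Set ℕ} : ∀ y ∈ psiPoints m W, y ≤ 2 ^ m := by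
  rintro y ((rfl | rfl) | ⟨n, -, rfl⟩)
  · exact Nat.zero_le _
  · exact le_rfl
  · exact (psiNum_lt m n).le

def MeetsRuns (S : Set ℕ) (N B : ℕ) : Prop := ∀ X, X + B ≤ N + 1 → ∃ y ∈ S, X ≤ y ∧ y < X + B

section MeetsRuns

variable {m B L : ℕ}

theorem meetsRuns_of_bridge {t : ℕ} (hB : 2 ^ m < B) (h : Bridge m B L t t (2 ^ m) (2 ^ m)) :
    MeetsRuns (psiPoints (m + 1) (Set.Ico t (t + L))) (2 ^ (m + 1)) B := by
  obtain ⟨p, hp, q, hq, hp₁, -, hq₁, -, hpq⟩ := h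
  intro X hX
  rw [pow_succ] at hX
  rcases le_or_gt X (psiNum (m + 1) p) with h | h
  · exact ⟨_, .inr ⟨p, hp, rfl⟩, h, by omega⟩
  · exact ⟨_, .inr ⟨q, hq, rfl⟩, by omega, by omega⟩

theorem exists_mem_psiPoints_of_two_pow_lt
    (hrun : ∀ t, MeetsRuns (psiPoints (m + 1) (Set.Ico t (t + L))) (2 ^ (m + 1)) B)
    (hwrap : ∀ t, Bridge m B L t t (2 ^ (m + 1)) 0) {t X : ℕ}
    (hX₁ : 2 ^ (m + 1) < X) (hX₂ : X + B ≤ 2 ^ (m + 2) + 1) :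
    ∃ y ∈ psiPoints (m + 2) (Set.Ico t (t + 2 * L)), X ≤ y ∧ y < X + B := by
  have hhigh : ∀ s ∈ Set.Ico (t / 2) (t / 2 + L), 2 ^ m ≤ psiNum (m + 1) s →
      2 ^ m + psiNum (m + 1) s ∈ psiPoints (m + 2) (Set.Ico t (t + 2 * L)) :=
    fun s ⟨hs₁, hs₂⟩ h => .inr ⟨2 * s + 1, ⟨by omega, by omega⟩, psiNum_two_mul_add_one_of_le h⟩
  have hlow : ∀ s ∈ Set.Ico (t / 2) (t / 2 + L), psiNum (m + 1) s < 2 ^ m →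
      2 ^ (m + 1) + 2 ^ m + psiNum (m + 1) s ∈ psiPoints (m + 2) (Set.Ico t (t + 2 * L)) :=
    fun s ⟨hs₁, hs₂⟩ h => .inr ⟨2 * s + 1, ⟨by omega, by omega⟩, psiNum_two_mul_add_one_of_lt h⟩
  obtain ⟨p, hp, q, hq, hp₁, hp₂, -, hq₂, hpq⟩ := hwrap (t / 2)
  rw [pow_succ] at hX₁ hp₁ hpq
  rw [pow_succ, pow_succ] at hX₂
  by_cases hleft : X + B ≤ 2 ^ m * 2 + 2 ^ m
  · obtain ⟨y, (rfl | rfl) | ⟨s, hs, rfl⟩, hXy, hyX⟩ := hrun (t / 2) (X - 2 ^ m) (by omega)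
    · omega
    · omega
    · exact ⟨_, hhigh s hs (by omega), by omega, by omega⟩
  by_cases hcut : X ≤ 2 ^ m * 2 + 2 ^ m
  · rcases le_or_gt X (2 ^ m + psiNum (m + 1) p) with h | h
    · exact ⟨_, hhigh p hp (by omega), h, by omega⟩
    · exact ⟨_, hlow q hq (by omega), by omega, by omega⟩
  by_cases hright : X + B ≤ 2 ^ m * 2 * 2
  · obtain ⟨y, (rfl | rfl) | ⟨s, hs, rfl⟩, hXy, hyX⟩ :=
      hrun (t / 2) (X - (2 ^ m * 2 + 2 ^ m)) (by omega)
    · omega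
    · omega
    · exact ⟨_, hlow s hs (by omega), by omega, by omega⟩
  · exact ⟨2 ^ m * 2 * 2, .inl (.inr rfl), by omega, by omega⟩

theorem meetsRuns_succ
    (hrun : ∀ t, MeetsRuns (psiPoints (m + 1) (Set.Ico t (t + L))) (2 ^ (m + 1)) B)
    (hmid : ∀ t d, d ≤ 1 → Bridge m B L (t + d) t (2 ^ (m + 1)) (2 ^ m))
    (hwrap : ∀ t, Bridge m B L t t (2 ^ (m + 1)) 0) (t : ℕ) :
    MeetsRuns (psiPoints (m + 2) (Set.Ico t (t + 2 * L))) (2 ^ (m + 2)) B := by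
  intro X hX
  by_cases hup : 2 ^ (m + 1) < X
  · exact exists_mem_psiPoints_of_two_pow_lt hrun hwrap hup hX
  have heven : ∀ s, t ≤ 2 * s → 2 * s < t + 2 * L →
      psiNum (m + 1) s ∈ psiPoints (m + 2) (Set.Ico t (t + 2 * L)) :=
    fun s h₁ h₂ => .inr ⟨2 * s, ⟨h₁, h₂⟩, psiNum_two_mul _ s⟩
  by_cases hbot : X + B ≤ 2 ^ (m + 1)
  · obtain ⟨y, (rfl | rfl) | ⟨s, ⟨hs₁, hs₂⟩, rfl⟩, hXy, hyX⟩ :=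
      hrun ((t + 1) / 2) X (by omega)
    · exact ⟨0, .inl (.inl rfl), hXy, hyX⟩
    · omega
    · exact ⟨_, heven s (by omega) (by omega), hXy, hyX⟩
  obtain ⟨p, ⟨hp₁, hp₂⟩, q, ⟨hq₁, hq₂⟩, hp, -, hq, hq', hpq⟩ :=
    hmid (t / 2) ((t + 1) / 2 - t / 2) (by omega)
  have := pow_succ 2 m
  rcases le_or_gt X (psiNum (m + 1) p) with h | h
  · exact ⟨_, heven p (by omega) (by omega), h, by omega⟩
  · exact ⟨_, .inr ⟨2 * q + 1, ⟨by omega, by omega⟩, psiNum_two_mul_add_one_of_le hq⟩,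
      by omega, by omega⟩

end MeetsRuns

theorem meetsRuns_psiPoints_three_mul_two_pow (j k t : ℕ) :
    MeetsRuns (psiPoints (k + j + 3) (Set.Ico t (t + 3 * 2 ^ k))) (2 ^ (k + j + 3))
      (5 * 2 ^ j) := by
  induction k generalizing t with
  | zero =>
    have hB : 2 ^ (j + 2) < 5 * 2 ^ j := by rw [pow_add]; have := Nat.two_pow_pos j; omega
    have h := (psiBridges_three_mul_two_pow j 0 t 0 zero_le_one).1
    rw [zero_add] at h ⊢
    exact meetsRuns_of_bridge hB h
  | succ k ih =>
    have h := meetsRuns_succ ih (fun t d hd => (psiBridges_three_mul_two_pow j k t d hd).2.1)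
      (fun t => (psiBridges_three_mul_two_pow j k t 0 zero_le_one).2.2.1) t
    rwa [show k + j + 2 + 2 = k + 1 + j + 3 by omega, ← mul_assoc, mul_comm 2 3, mul_assoc,
      ← pow_succ'] at h

def GapsLE {α : Type*} [LinearOrder α] [Sub α] (S : Set α) (B : α) : Prop :=
  ∀ x ∈ S, ∀ y ∈ S, x < y → (∀ z ∈ S, ¬(x < z ∧ z < y)) → y - x ≤ B

theorem GapsLE.mono {α : Type*} [LinearOrder α] [Sub α] {S : Set α} {B B' : α}
    (h : GapsLE S B) (hB : B ≤ B') : GapsLE S B' :=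
  fun x hx y hy hxy hgap => (h x hx y hy hxy hgap).trans hB

theorem gapsLE_of_meetsRuns {S : Set ℕ} {N B : ℕ} (h : MeetsRuns S N B)
    (hS : ∀ y ∈ S, y ≤ N) : GapsLE S B := by
  intro x hx y hy hxy hgap
  by_contra! hfar
  obtain ⟨z, hz, hxz, hzy⟩ := h (x + 1) (by have := hS y hy; omega)
  exact hgap z hz ⟨by omega, by omega⟩

theorem GapsLE.image_div {Y : Set ℕ} {B : ℕ} (h : GapsLE Y B) {D : ℝ} (hD : 0 < D) :
    GapsLE ((fun y : ℕ => (y : ℝ) / D) '' Y) (B / D) := by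
  have hmono : StrictMono fun y : ℕ => (y : ℝ) / D :=
    fun a b hab => div_lt_div_of_pos_right (by exact_mod_cast hab) hD
  rintro _ ⟨x, hx, rfl⟩ _ ⟨y, hy, rfl⟩ hxy hgap
  have hxy' := hmono.lt_iff_lt.1 hxy
  have hle := h x hx y hy hxy' fun z hz hxzy =>
    hgap _ ⟨z, hz, rfl⟩ ⟨hmono hxzy.1, hmono hxzy.2⟩
  rw [← sub_div]
  gcongr
  rw [← Nat.cast_sub hxy'.le]
  exact_mod_cast hle

theorem gapsLE_two_of_lift {m a L : ℕ} (haL : a + L ≤ 2 ^ m)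
    (h : ∀ ε ≤ 1, MeetsRuns (psiPoints (m + 1) (Set.Ico (a + ε * 2 ^ m) (a + ε * 2 ^ m + L)))
      (2 ^ (m + 1)) 5) :
    GapsLE (psiPoints m (Set.Ico a (a + L))) 2 := by
  intro y₁ hy₁ y₂ hy₂ hlt hgap
  by_contra! hfar
  have hy₂le := psiPoints_le y₂ hy₂
  -- `psiNum m` is injective on the window, so one shift sends the value `y₁` to `2 * y₁`
  obtain ⟨ε, hε, hlift⟩ : ∃ ε ≤ 1, ∀ n ∈ Set.Ico a (a + L), psiNum m n = y₁ →
      psiNum (m + 1) (n + ε * 2 ^ m) = 2 * y₁ := by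
    by_cases h₁ : ∃ n ∈ Set.Ico a (a + L), psiNum m n = y₁
    · obtain ⟨n₁, hn₁, rfl⟩ := h₁
      refine ⟨psiDigit n₁ (m + 1), psiDigit_le_one _ _, fun n hn hnn => ?_⟩
      obtain rfl : n = n₁ :=
        psiNum_injOn m (hn.2.trans_le haL) (hn₁.2.trans_le haL) hnn
      rw [psiNum_succ_add_mul_two_pow m n (psiDigit_le_one _ _)]
      omega
    · push Not at h₁
      exact ⟨0, zero_le_one, fun n hn hnn => absurd hnn (h₁ n hn)⟩
  obtain ⟨z, (rfl | rfl) | ⟨n', ⟨hn'₁, hn'₂⟩, rfl⟩, hz₁, hz₂⟩ :=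
    h ε hε (2 * y₁ + 1) (by rw [pow_succ]; omega)
  · omega
  · rw [pow_succ] at hz₂; omega
  · obtain ⟨n, rfl⟩ : ∃ n, n' = n + ε * 2 ^ m := ⟨n' - ε * 2 ^ m, by omega⟩
    have hn : n ∈ Set.Ico a (a + L) := ⟨by omega, by omega⟩
    rw [psiNum_succ_add_mul_two_pow m n hε] at hz₁ hz₂
    have hval : psiNum m n = y₁ := by
      by_contra hne
      exact hgap _ (.inr ⟨n, hn, rfl⟩) ⟨by omega, by omega⟩
    have := hlift n hn hval
    rw [psiNum_succ_add_mul_two_pow m n hε] at this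
    omega

theorem image_psiPoints (m : ℕ) (W : Set ℕ) :
    (fun y : ℕ => (y : ℝ) / 2 ^ m) '' psiPoints m W = {0, 1} ∪ (fun n => psiMap m n) '' W := by
  simp [psiPoints, Set.image_union, Set.image_insert_eq, Set.image_image, psiMap_eq]

theorem psi_gap_C_general (m k a : ℕ) (hk1 : 1 ≤ k) (hkm : k ≤ m - 1)
    (ha2 : a + 3 * 2 ^ (k - 1) ≤ 2 ^ m) (S : Set ℝ)
    (hS : S = {0, 1} ∪ (fun n => psiMap m n) '' {n : ℕ | a ≤ n ∧ n < a + 3 * 2 ^ (k - 1)}) :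
    ∀ t₁ ∈ S, ∀ t₂ ∈ S, t₁ < t₂ → (∀ t ∈ S, ¬(t₁ < t ∧ t < t₂)) →
      t₂ - t₁ ≤ 5 / (2 : ℝ) ^ (k + 2) := by
  obtain ⟨k, rfl⟩ : ∃ j, k = j + 1 := ⟨k - 1, by omega⟩
  rw [Nat.add_sub_cancel] at ha2 hS
  obtain rfl : S = (fun y : ℕ => (y : ℝ) / 2 ^ m) '' psiPoints m (Set.Ico a (a + 3 * 2 ^ k)) := by
    rw [hS, image_psiPoints]; rfl
  obtain rfl | ⟨j, rfl⟩ : m = k + 2 ∨ ∃ j, m = k + j + 3 :=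
    (eq_or_lt_of_le (show k + 2 ≤ m by omega)).imp Eq.symm fun _ => ⟨m - k - 3, by omega⟩
  · have h := gapsLE_two_of_lift ha2 fun ε _ => by
      simpa [add_assoc] using meetsRuns_psiPoints_three_mul_two_pow 0 k (a + ε * 2 ^ (k + 2))
    refine (h.image_div (by positivity)).mono ?_
    rw [div_le_div_iff₀ (by positivity) (by positivity)]
    simp only [pow_succ]
    push_cast
    nlinarith [pow_pos (two_pos : (0 : ℝ) < 2) k]
  · have h := gapsLE_of_meetsRuns (meetsRuns_psiPoints_three_mul_two_pow j k a) psiPoints_le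
    refine (h.image_div (by positivity)).mono (le_of_eq ?_)
    push_cast
    rw [show k + j + 3 = (k + 1 + 2) + j by ring, pow_add]
    field_simp

/-- For a set `C` of `3·2^{k−1}` consecutive integers in `{1,…,2^m−1}` with
`k ∈ {1,…,m−1}`, every gap of `ψ(C) ∪ {0,1}` is at most `5/2^{k+2}`. -/
theorem psi_gap_C (m k a : ℕ) (hm : 2 ≤ m) (hk1 : 1 ≤ k) (hkm : k ≤ m - 1)
    (ha1 : 1 ≤ a) (ha2 : a + 3 * 2 ^ (k - 1) ≤ 2 ^ m) (S : Set ℝ)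
    (hS : S = {0, 1} ∪ (fun n => psiMap m n) '' {n : ℕ | a ≤ n ∧ n < a + 3 * 2 ^ (k - 1)}) :
    ∀ t₁ ∈ S, ∀ t₂ ∈ S, t₁ < t₂ → (∀ t ∈ S, ¬(t₁ < t ∧ t < t₂)) →
      t₂ - t₁ ≤ 5 / (2 : ℝ) ^ (k + 2) :=
  psi_gap_C_general m k a hk1 hkm ha2 S hS
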